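/- arXiv:1708.00440 — 2 statements merged into one kernel-verified Lean document; each statement's English description precedes it below -/
import Mathlib

section
/- Let F(t) = e^{t/2} · Σ_{n∈ℤ} e^{−πn²e^{2t}} for t ∈ ℝ. Then F is twice differentiable on ℝ and for every real t, Φ(t) = (1/2)·(F''(t) − (1/4)·F(t)). -/
/-- Polya's function `Φ(t) = ∑_{n≥1} (4π²n⁴e^{9t/2} − 6πn²e^{5t/2}) e^{−πn²e^{2t}}`. -/
noncomputable def Phi (t : ℝ) : ℝ :=
  ∑' n : ℕ,
    (4 * Real.pi ^ 2 * ((n : ℝ) + 1) ^ 4 * Real.exp (9 * t / 2)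
      - 6 * Real.pi * ((n : ℝ) + 1) ^ 2 * Real.exp (5 * t / 2))
    * Real.exp (-Real.pi * ((n : ℝ) + 1) ^ 2 * Real.exp (2 * t))

/-- `F(t) = e^{t/2} θ(e^{2t})` where `θ` is Jacobi's theta function. -/
noncomputable def Fθ (t : ℝ) : ℝ :=
  Real.exp (t / 2) * ∑' n : ℤ, Real.exp (-Real.pi * (n : ℝ) ^ 2 * Real.exp (2 * t))

/-!
With `v = e^{2t}` and `S_k(v) = ∑_{n ∈ ℤ} n^{2k} e^{-πn²v}`, termwise differentiation (the
derivatives are dominated on `v > v₀/2` by the Gaussian decay of the terms) gives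
`S_k' = -π S_{k+1}`, hence `F'' = e^{t/2} (S_0/4 - 6πv S_1 + 4π²v² S_2)`. On the other side the
summands of `Φ` extend to even functions of `n ∈ ℤ` vanishing at `0`, so
`2Φ = e^{t/2} (4π²v² S_2 - 6πv S_1)`, which is `F'' - F/4`.
-/

open Real

noncomputable def thetaMoment (k : ℕ) (v : ℝ) : ℝ :=
  ∑' n : ℤ, (n : ℝ) ^ (2 * k) * exp (-π * n ^ 2 * v)

lemma summable_thetaMoment (k : ℕ) {v : ℝ} (hv : 0 < v) :
    Summable fun n : ℤ ↦ (n : ℝ) ^ (2 * k) * exp (-π * n ^ 2 * v) := by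
  refine (summable_pow_mul_jacobiTheta₂_term_bound 0 hv (2 * k)).congr fun n ↦ ?_
  rw [Int.cast_abs, (even_two_mul k).pow_abs]
  ring_nf

lemma hasDerivAt_thetaMoment (k : ℕ) {v : ℝ} (hv : 0 < v) :
    HasDerivAt (thetaMoment k) (-π * thetaMoment (k + 1) v) v := by
  have hterm (n : ℤ) (w : ℝ) :
      HasDerivAt (fun w ↦ (n : ℝ) ^ (2 * k) * exp (-π * n ^ 2 * w))
        (-π * ((n : ℝ) ^ (2 * (k + 1)) * exp (-π * n ^ 2 * w))) w := by
    refine ((((hasDerivAt_id' w).const_mul (-π * n ^ 2)).exp).const_mul _).congr_deriv ?_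
    ring
  have hbound (n : ℤ) (w : ℝ) (hw : w ∈ Set.Ioi (v / 2)) :
      ‖-π * ((n : ℝ) ^ (2 * (k + 1)) * exp (-π * n ^ 2 * w))‖
        ≤ π * ((n : ℝ) ^ (2 * (k + 1)) * exp (-π * n ^ 2 * (v / 2))) := by
    have hexp : -π * n ^ 2 * w ≤ -π * n ^ 2 * (v / 2) := mul_le_mul_of_nonpos_left hw.le
      (mul_nonpos_of_nonpos_of_nonneg (neg_nonpos.mpr pi_pos.le) (sq_nonneg _))
    have hpow := (even_two_mul (k + 1)).pow_nonneg (n : ℝ)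
    rw [norm_mul, norm_neg, Real.norm_of_nonneg pi_pos.le,
      Real.norm_of_nonneg (mul_nonneg hpow (exp_pos _).le)]
    gcongr
  have := hasDerivAt_tsum_of_isPreconnected
    ((summable_thetaMoment (k + 1) (half_pos hv)).mul_left π) isOpen_Ioi isPreconnected_Ioi
    (fun n w _ ↦ hterm n w) hbound (half_lt_self hv)
    (summable_thetaMoment k hv) (half_lt_self hv)
  rwa [tsum_mul_left] at this

lemma hasDerivAt_thetaMoment_exp (k : ℕ) (t : ℝ) :
    HasDerivAt (fun t ↦ thetaMoment k (exp (2 * t)))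
      (-2 * π * exp (2 * t) * thetaMoment (k + 1) (exp (2 * t))) t := by
  refine ((hasDerivAt_thetaMoment k (exp_pos (2 * t))).comp t
    ((hasDerivAt_id' t).const_mul 2).exp).congr_deriv ?_
  ring

lemma tsum_int_eq_two_nsmul_tsum_nat_succ {G : Type*} [AddCommGroup G] [UniformSpace G]
    [IsUniformAddGroup G] [CompleteSpace G] [T2Space G] {f : ℤ → G} (hf : f.Even)
    (hf₀ : f 0 = 0) (hs : Summable f) : ∑' n, f n = 2 • ∑' n : ℕ, f (n + 1) := by
  rw [tsum_int_eq_zero_add_two_mul_tsum_pnat hf hs, hf₀, zero_add,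
    tsum_pnat_eq_tsum_succ (f := fun n : ℕ ↦ f n)]
  push_cast
  rfl

lemma Phi_eq_thetaMoment (t : ℝ) :
    Phi t = exp (t / 2) * (2 * π ^ 2 * exp (2 * t) ^ 2 * thetaMoment 2 (exp (2 * t))
      - 3 * π * exp (2 * t) * thetaMoment 1 (exp (2 * t))) := by
  set v := exp (2 * t) with hv_def
  have hv : 0 < v := exp_pos _
  set f : ℤ → ℝ :=
    fun n ↦ (4 * π ^ 2 * n ^ 4 * v ^ 2 - 6 * π * n ^ 2 * v) * exp (-π * n ^ 2 * v)
  have hS₂ := (summable_thetaMoment 2 hv).mul_left (4 * π ^ 2 * v ^ 2)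
  have hS₁ := (summable_thetaMoment 1 hv).mul_left (6 * π * v)
  have hsum : 4 * π ^ 2 * v ^ 2 * thetaMoment 2 v - 6 * π * v * thetaMoment 1 v
      = ∑' n : ℤ, f n := by
    rw [thetaMoment, thetaMoment, ← tsum_mul_left, ← tsum_mul_left, ← hS₂.tsum_sub hS₁]
    exact tsum_congr fun n ↦ by ring
  have hfold : ∑' n : ℤ, f n = 2 * ∑' n : ℕ, f (n + 1) := by
    refine (tsum_int_eq_two_nsmul_tsum_nat_succ (fun n ↦ ?_) (by simp [f])
      ((hS₂.sub hS₁).congr fun n ↦ by ring)).trans (nsmul_eq_mul _ _)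
    simp only [f, Int.cast_neg, neg_sq, (by decide : Even 4).neg_pow]
  have hPhi : Phi t = exp (t / 2) * ∑' n : ℕ, f (n + 1) := by
    have h9 : exp (9 * t / 2) = exp (t / 2) * v ^ 2 := by
      rw [hv_def, ← exp_nat_mul, ← exp_add]; ring_nf
    have h5 : exp (5 * t / 2) = exp (t / 2) * v := by
      rw [hv_def, ← exp_add]; ring_nf
    rw [Phi, ← tsum_mul_left]
    refine tsum_congr fun n ↦ ?_
    simp only [f, h9, h5]
    push_cast
    ring
  rw [hPhi]
  linear_combination -exp (t / 2) / 2 * (hsum.trans hfold)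

lemma Fθ_eq_thetaMoment (t : ℝ) : Fθ t = exp (t / 2) * thetaMoment 0 (exp (2 * t)) := by
  simp [Fθ, thetaMoment]

noncomputable def Fθ' (t : ℝ) : ℝ :=
  exp (t / 2) * (thetaMoment 0 (exp (2 * t)) / 2
    - 2 * π * exp (2 * t) * thetaMoment 1 (exp (2 * t)))

noncomputable def Fθ'' (t : ℝ) : ℝ :=
  exp (t / 2) * (thetaMoment 0 (exp (2 * t)) / 4
    - 6 * π * exp (2 * t) * thetaMoment 1 (exp (2 * t))
    + 4 * π ^ 2 * exp (2 * t) ^ 2 * thetaMoment 2 (exp (2 * t)))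

lemma hasDerivAt_exp_half (t : ℝ) : HasDerivAt (fun t ↦ exp (t / 2)) (exp (t / 2) / 2) t :=
  ((hasDerivAt_id' t).div_const 2).exp.congr_deriv (by ring)

lemma hasDerivAt_exp_two_mul (t : ℝ) :
    HasDerivAt (fun t ↦ exp (2 * t)) (2 * exp (2 * t)) t := by
  simpa [mul_comm] using ((hasDerivAt_id' t).const_mul 2).exp

lemma hasDerivAt_Fθ (t : ℝ) : HasDerivAt Fθ (Fθ' t) t := by
  rw [funext Fθ_eq_thetaMoment]
  exact ((hasDerivAt_exp_half t).mul (hasDerivAt_thetaMoment_exp 0 t)).congr_deriv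
    (by rw [Fθ']; ring)

lemma hasDerivAt_Fθ' (t : ℝ) : HasDerivAt Fθ' (Fθ'' t) t := by
  have hinner := ((hasDerivAt_thetaMoment_exp 0 t).div_const 2).sub
    (((hasDerivAt_exp_two_mul t).const_mul (2 * π)).mul (hasDerivAt_thetaMoment_exp 1 t))
  exact ((hasDerivAt_exp_half t).mul hinner).congr_deriv (by
    rw [Fθ'']
    simp only [Pi.sub_apply, Pi.mul_apply]
    ring)

/-- `F` is twice differentiable and `Φ(t) = (1/2)(F''(t) − F(t)/4)`. -/
theorem Phi_eq_theta_combination :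
    ∃ F' F'' : ℝ → ℝ,
      (∀ t : ℝ, HasDerivAt Fθ (F' t) t) ∧
      (∀ t : ℝ, HasDerivAt F' (F'' t) t) ∧
      (∀ t : ℝ, Phi t = (1 / 2) * (F'' t - (1 / 4) * Fθ t)) :=
  ⟨Fθ', Fθ'', hasDerivAt_Fθ, hasDerivAt_Fθ', fun t ↦ by
    rw [Phi_eq_thetaMoment, Fθ'', Fθ_eq_thetaMoment]
    ring⟩
end

section
/- Asymptotic matching of the tunnelling time: fix real β ≥ 0 and real γ, and for E sufficiently negative define T(E) = (1/2)·∫₀^∞ (4π²e^{2w} − βe^{w} + γ − E)^{−1/2} dw. Then E·( T(E) − (1/(2√(−E)))·log(√(−E)/π) ) tends to −β/(8π) as E → −∞. In particular, T(E) matches the expansion (1/(2√(−E)))·log(√(−E)/π) − κ/(2E) to order E^{−1} if and only if β = 4πκ, independently of γ. -/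
open Filter MeasureTheory

/-!
Put `c = γ - E`. The substitution `v = e^{-w}` turns `2 T(E)` into
`∫₀¹ dv / √(c v² - β v + 4π²)`, whose primitive is
`c^{-1/2} log (2 c v - β + 2 √c √(c v² - β v + 4π²))`; hence
`2 √c T(E) = log (2c - β + 2 √c √(c - β + 4π²)) - log (4π √c - β)`.
With `s = -E`, the first logarithm is `log (4c) + O(1/c)`, and trading `√c` for `√s` in
`log (√c/π) / √c` costs `o(1/s)`, so the only contribution of order `1/s` comes from
`(s / (2√c)) log (1 - β/(4π√c)) → -β/(8π)`.
-/

open Real Set Topology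

section QuadraticPrimitive

variable {c β k : ℝ}

lemma quadratic_pos_of_sq_lt (hc : 0 < c) (hk : β ^ 2 < 4 * c * k) (v : ℝ) :
    0 < c * v ^ 2 - β * v + k := by
  nlinarith [sq_nonneg (2 * c * v - β)]

lemma quadratic_primitive_arg_pos (hc : 0 < c) (hk : β ^ 2 < 4 * c * k) (v : ℝ) :
    0 < 2 * c * v - β + 2 * √c * √(c * v ^ 2 - β * v + k) := by
  have hsq : (2 * c * v - β) ^ 2 < (2 * √c * √(c * v ^ 2 - β * v + k)) ^ 2 := by
    rw [mul_pow, mul_pow, sq_sqrt hc.le, sq_sqrt (quadratic_pos_of_sq_lt hc hk v).le]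
    nlinarith
  linarith [neg_abs_le (2 * c * v - β), abs_lt_of_sq_lt_sq hsq (by positivity)]

lemma hasDerivAt_log_quadratic_primitive (hc : 0 < c) (hk : β ^ 2 < 4 * c * k) (v : ℝ) :
    HasDerivAt (fun v => log (2 * c * v - β + 2 * √c * √(c * v ^ 2 - β * v + k)))
      (√c / √(c * v ^ 2 - β * v + k)) v := by
  have hQ := quadratic_pos_of_sq_lt hc hk v
  have hQ' : HasDerivAt (fun v => c * v ^ 2 - β * v + k) (2 * c * v - β) v := by
    refine ((((hasDerivAt_pow 2 v).const_mul c).sub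
      ((hasDerivAt_id v).const_mul β)).add_const k).congr_deriv ?_
    simp only [Nat.cast_ofNat]; ring
  have hM := (quadratic_primitive_arg_pos hc hk v).ne'
  refine (((((hasDerivAt_id v).const_mul (2 * c)).sub_const β).add
    ((hQ'.sqrt hQ.ne').const_mul (2 * √c))).log hM).congr_deriv ?_
  have hs : √c * √c = c := mul_self_sqrt hc.le
  have hp : 0 < √(c * v ^ 2 - β * v + k) := sqrt_pos.2 hQ
  simp only [Pi.add_apply, id]
  generalize √(c * v ^ 2 - β * v + k) = p at hM hp ⊢
  field_simp
  linear_combination (-2 * p) * hs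

end QuadraticPrimitive

lemma sqrt_quadratic_exp_neg (ρ β c w : ℝ) :
    √(c * exp (-w) ^ 2 - β * exp (-w) + 4 * ρ ^ 2)
      = exp (-w) * √(4 * ρ ^ 2 * exp (2 * w) - β * exp w + c) := by
  have he : c * exp (-w) ^ 2 - β * exp (-w) + 4 * ρ ^ 2
      = exp (-w) ^ 2 * (4 * ρ ^ 2 * exp (2 * w) - β * exp w + c) := by
    rw [exp_neg, two_mul, exp_add]
    field_simp
    ring
  rw [he, sqrt_mul (by positivity), sqrt_sq (exp_pos _).le]

theorem integral_inv_sqrt_quadratic_exp {ρ β c : ℝ} (hρ : 0 ≤ ρ) (h : β ^ 2 < 16 * ρ ^ 2 * c) :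
    ∫ w in Ioi 0, (√(4 * ρ ^ 2 * exp (2 * w) - β * exp w + c))⁻¹
      = (√c)⁻¹ * (log (2 * c - β + 2 * √c * √(c - β + 4 * ρ ^ 2)) - log (4 * ρ * √c - β)) := by
  have hc : 0 < c := by nlinarith [sq_nonneg β, sq_nonneg ρ]
  have hk : β ^ 2 < 4 * c * (4 * ρ ^ 2) := by linarith
  set F := fun v => log (2 * c * v - β + 2 * √c * √(c * v ^ 2 - β * v + 4 * ρ ^ 2))
  have hF := hasDerivAt_log_quadratic_primitive hc hk
  have hG (w : ℝ) : HasDerivAt (fun w => -(√c)⁻¹ * F (exp (-w)))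
      (√(4 * ρ ^ 2 * exp (2 * w) - β * exp w + c))⁻¹ w := by
    have hP : 0 < 4 * ρ ^ 2 * exp (2 * w) - β * exp w + c := by
      have := quadratic_pos_of_sq_lt (c := 4 * ρ ^ 2) (β := β) (k := c)
        (by nlinarith [sq_nonneg β]) (by linarith) (exp w)
      rwa [two_mul, exp_add, ← sq]
    refine (((hF (exp (-w))).comp w (hasDerivAt_neg w).exp).const_mul (-(√c)⁻¹)).congr_deriv ?_
    rw [sqrt_quadratic_exp_neg ρ β c w]
    field_simp
  have hlim : Tendsto (fun w => -(√c)⁻¹ * F (exp (-w))) atTop (𝓝 (-(√c)⁻¹ * F 0)) :=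
    ((hF 0).continuousAt.tendsto.comp tendsto_exp_neg_atTop_nhds_zero).const_mul _
  have hF0 : F 0 = log (4 * ρ * √c - β) := by
    simp only [F]
    rw [show c * 0 ^ 2 - β * 0 + 4 * ρ ^ 2 = (2 * ρ) ^ 2 by ring, sqrt_sq (by positivity)]
    ring_nf
  have hF1 : F 1 = log (2 * c - β + 2 * √c * √(c - β + 4 * ρ ^ 2)) := by
    simp only [F]
    ring_nf
  rw [integral_Ioi_of_hasDerivAt_of_nonneg (hG 0).continuousAt.continuousWithinAt
    (fun w _ => hG w) (fun w _ => by positivity) hlim, neg_zero, exp_zero, hF0, hF1]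
  ring

lemma tendsto_div_const_add_self (γ : ℝ) : Tendsto (fun s => s / (γ + s)) atTop (𝓝 1) := by
  have hc : Tendsto (fun s => γ + s) atTop atTop := tendsto_atTop_add_const_left _ γ tendsto_id
  have := (tendsto_const_nhds (x := γ)).div_atTop hc |>.const_sub 1
  rw [sub_zero] at this
  refine this.congr' ?_
  filter_upwards [hc.eventually_gt_atTop 0] with s hs
  field_simp
  ring

lemma tendsto_mul_log_one_add_of_tendsto_mul {α : Type*} {l : Filter α} {f g : α → ℝ} {L : ℝ}
    (hg : Tendsto g l (𝓝 0)) (hf : ∀ᶠ x in l, 0 ≤ f x)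
    (hfg : Tendsto (fun x => f x * g x) l (𝓝 L)) :
    Tendsto (fun x => f x * log (1 + g x)) l (𝓝 L) := by
  have hlow : Tendsto (fun x => f x * g x / (1 + g x)) l (𝓝 L) := by
    have := hfg.div (hg.const_add 1) (by norm_num)
    rwa [add_zero, div_one] at this
  have hpos : ∀ᶠ x in l, 0 < 1 + g x := by
    simpa using (hg.const_add 1).eventually (lt_mem_nhds (by norm_num : (0 : ℝ) < 1 + 0))
  refine tendsto_of_tendsto_of_tendsto_of_le_of_le' hlow hfg ?_ ?_
  · filter_upwards [hf, hpos] with x hfx hx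
    rw [mul_div_assoc]
    refine mul_le_mul_of_nonneg_left ?_ hfx
    calc g x / (1 + g x) = 1 - (1 + g x)⁻¹ := by field_simp; ring
      _ ≤ log (1 + g x) := one_sub_inv_le_log_of_pos hx
  · filter_upwards [hf, hpos] with x hfx hx
    refine mul_le_mul_of_nonneg_left ?_ hfx
    linarith [log_le_sub_one_of_pos hx]

lemma tendsto_sqrt_mul_sqrt_add_sub_sqrt (d : ℝ) :
    Tendsto (fun t => √t * (√(t + d) - √t)) atTop (𝓝 (d / 2)) := by
  have ha : Tendsto (fun t => √(1 + d / t)) atTop (𝓝 1) := by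
    simpa using ((tendsto_const_nhds.div_atTop tendsto_id).const_add 1).sqrt
  have hlim : Tendsto (fun t => d / (√(1 + d / t) + 1)) atTop (𝓝 (d / 2)) := by
    convert (tendsto_const_nhds (x := d)).div (ha.add_const 1) (by norm_num) using 2 <;> norm_num
  refine hlim.congr' ?_
  filter_upwards [eventually_gt_atTop 0, eventually_gt_atTop (-d)] with t ht htd
  have h1 : 1 + d / t = (t + d) / t := by field_simp
  have h1pos : 0 ≤ 1 + d / t := by rw [h1]; exact (div_pos (by linarith) ht).le
  have hsplit : √(t + d) = √t * √(1 + d / t) := by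
    rw [← sqrt_mul ht.le, h1, mul_div_cancel₀ _ ht.ne']
  have ht2 := sq_sqrt ht.le
  have ha2 := sq_sqrt h1pos
  have ha0 := sqrt_nonneg (1 + d / t)
  rw [hsplit]
  generalize √(1 + d / t) = a at ha0 ha2 ⊢
  generalize √t = r at ht2 ⊢
  have : 0 < a + 1 := by linarith
  field_simp
  rw [ht2]
  linear_combination (-t) * ha2 - div_mul_cancel₀ d ht.ne'

lemma tendsto_sqrt_mul_log_div_four_mul (β d : ℝ) :
    Tendsto (fun t => √t * log ((2 * t - β + 2 * √t * √(t + d)) / (4 * t))) atTop (𝓝 0) := by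
  have hY : Tendsto (fun t => 2 * (√t * (√(t + d) - √t)) - β) atTop (𝓝 (d - β)) := by
    have := ((tendsto_sqrt_mul_sqrt_add_sub_sqrt d).const_mul 2).sub_const β
    rwa [mul_div_cancel₀ _ two_ne_zero] at this
  have hfg : Tendsto (fun t => √t * ((2 * t - β + 2 * √t * √(t + d)) / (4 * t) - 1))
      atTop (𝓝 0) := by
    have := hY.mul (tendsto_inv_atTop_zero.comp (tendsto_sqrt_atTop.const_mul_atTop four_pos))
    rw [mul_zero] at this
    refine this.congr' ?_
    filter_upwards [eventually_gt_atTop 0] with t ht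
    have hr := sqrt_pos.2 ht
    simp only [Function.comp]
    field_simp
    linear_combination (β - 2 * √t * √(t + d)) * sq_sqrt ht.le
  have hg : Tendsto (fun t => (2 * t - β + 2 * √t * √(t + d)) / (4 * t) - 1) atTop (𝓝 0) := by
    have := hfg.mul (tendsto_inv_atTop_zero.comp tendsto_sqrt_atTop)
    rw [zero_mul] at this
    refine this.congr' ?_
    filter_upwards [eventually_gt_atTop 0] with t ht
    have hr := sqrt_pos.2 ht
    simp only [Function.comp]
    field_simp
  simpa using tendsto_mul_log_one_add_of_tendsto_mul hg
    (Eventually.of_forall fun t => sqrt_nonneg t) hfg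

lemma tendsto_log_div_const_div_self {ρ : ℝ} (hρ : 0 < ρ) :
    Tendsto (fun x => log (x / ρ) / x) atTop (𝓝 0) := by
  have := (isLittleO_log_id_atTop.tendsto_div_nhds_zero.comp
    (tendsto_id.atTop_div_const hρ)).div_const ρ
  rw [zero_div] at this
  refine this.congr' ?_
  filter_upwards [eventually_gt_atTop 0] with x hx
  simp only [Function.comp, id]
  field_simp

/-- With `q = √(γ + s)`, `r = √s` and `X = √(γ + s - β + 4ρ²)`, the left side is `E (T(E) - …)` at
`E = -s`; of the four terms on the right only the last has a nonzero limit as `s → ∞`. -/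
lemma neg_mul_tunnelling_sub_eq {ρ β γ s q r X : ℝ} (hρ : 0 < ρ) (hq : 0 < q) (hr : 0 < r)
    (hq2 : q ^ 2 = γ + s) (hr2 : r ^ 2 = s) (hB : 0 < 4 * ρ * q - β)
    (hN : 0 < 2 * (γ + s) - β + 2 * q * X) :
    -s * (1 / 2 * (q⁻¹ * (log (2 * (γ + s) - β + 2 * q * X) - log (4 * ρ * q - β)))
        - 1 / (2 * r) * log (r / ρ))
      = r * (q - r) / 2 * (log (q / ρ) / q) - (4 * r)⁻¹ * (s * log (1 + γ / s))
        - s / (γ + s) * (q * log ((2 * (γ + s) - β + 2 * q * X) / (4 * (γ + s))) / 2)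
        + s / (γ + s) * (q * log (1 + -β / (4 * ρ) / q) / 2) := by
  subst hr2
  obtain rfl : γ = q ^ 2 - r ^ 2 := by linarith
  rw [sub_add_cancel] at hN ⊢
  have hγ : 1 + (q ^ 2 - r ^ 2) / r ^ 2 = q ^ 2 / r ^ 2 := by field_simp; ring
  have hβ : 1 + -β / (4 * ρ) / q = (4 * ρ * q - β) / (4 * ρ * q) := by field_simp; ring
  have h4q : 4 * ρ * q ≠ 0 := by positivity
  rw [hγ, hβ, log_div hN.ne' (by positivity), log_div hB.ne' h4q,
    log_div (pow_pos hq 2).ne' (pow_pos hr 2).ne', log_div hq.ne' hρ.ne', log_div hr.ne' hρ.ne',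
    log_mul (by norm_num) (pow_pos hq 2).ne', log_mul (by positivity) hq.ne',
    log_mul (by norm_num) hρ.ne', log_pow, log_pow]
  push_cast
  field_simp
  ring

theorem tendsto_neg_mul_tunnellingTime_sub {ρ : ℝ} (hρ : 0 < ρ) (β γ : ℝ) :
    Tendsto (fun s => -s * ((1 / 2) * (∫ w in Ioi 0,
        (√(4 * ρ ^ 2 * exp (2 * w) - β * exp w + (γ + s)))⁻¹) - 1 / (2 * √s) * log (√s / ρ)))
      atTop (𝓝 (-β / (8 * ρ))) := by
  have hc : Tendsto (fun s => γ + s) atTop atTop := tendsto_atTop_add_const_left _ γ tendsto_id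
  have hq : Tendsto (fun s => √(γ + s)) atTop atTop := tendsto_sqrt_atTop.comp hc
  have hsc := tendsto_div_const_add_self γ
  have h1 : Tendsto (fun s => √s * (√(γ + s) - √s) / 2 * (log (√(γ + s) / ρ) / √(γ + s)))
      atTop (𝓝 0) := by
    have := ((tendsto_sqrt_mul_sqrt_add_sub_sqrt γ).div_const 2).mul
      ((tendsto_log_div_const_div_self hρ).comp hq)
    rw [mul_zero] at this
    exact this.congr fun s => by simp only [Function.comp, add_comm s γ]
  have h2 : Tendsto (fun s => (4 * √s)⁻¹ * (s * log (1 + γ / s))) atTop (𝓝 0) := by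
    simpa using (tendsto_inv_atTop_zero.comp (tendsto_sqrt_atTop.const_mul_atTop four_pos)).mul
      (tendsto_mul_log_one_add_div_atTop γ)
  have h3 : Tendsto (fun s => s / (γ + s) * (√(γ + s) * log ((2 * (γ + s) - β
      + 2 * √(γ + s) * √(γ + s - β + 4 * ρ ^ 2)) / (4 * (γ + s))) / 2)) atTop (𝓝 0) := by
    have := hsc.mul (((tendsto_sqrt_mul_log_div_four_mul β (4 * ρ ^ 2 - β)).comp hc).div_const 2)
    rw [zero_div, mul_zero] at this
    exact this.congr fun s => by
      simp only [Function.comp, show γ + s + (4 * ρ ^ 2 - β) = γ + s - β + 4 * ρ ^ 2 by ring]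
  have h4 : Tendsto (fun s => s / (γ + s) * (√(γ + s) * log (1 + -β / (4 * ρ) / √(γ + s)) / 2))
      atTop (𝓝 (-β / (8 * ρ))) := by
    have := hsc.mul (((tendsto_mul_log_one_add_div_atTop (-β / (4 * ρ))).comp hq).div_const 2)
    rwa [one_mul, div_div, mul_assoc, show (4 : ℝ) * (ρ * 2) = 8 * ρ by ring] at this
  have := ((h1.sub h2).sub h3).add h4
  rw [sub_zero, sub_zero, zero_add] at this
  refine this.congr' ?_
  filter_upwards [eventually_gt_atTop 0, hc.eventually_gt_atTop (β ^ 2 / (16 * ρ ^ 2)),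
    hc.eventually_gt_atTop (β / 2), hq.eventually_gt_atTop (β / (4 * ρ))] with s hs hβ hN hB
  have hβ' : β ^ 2 < 16 * ρ ^ 2 * (γ + s) := by
    rwa [div_lt_iff₀' (by positivity)] at hβ
  have hc0 : 0 < γ + s := (by positivity : (0 : ℝ) ≤ β ^ 2 / (16 * ρ ^ 2)).trans_lt hβ
  have hq0 : 0 < √(γ + s) := sqrt_pos.2 hc0
  rw [integral_inv_sqrt_quadratic_exp hρ.le hβ']
  refine (neg_mul_tunnelling_sub_eq hρ hq0 (sqrt_pos.2 hs) (sq_sqrt hc0.le) (sq_sqrt hs.le)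
    ?_ ?_).symm
  · rw [div_lt_iff₀' (by positivity)] at hB
    linarith
  · have := mul_nonneg hq0.le (sqrt_nonneg (γ + s - β + 4 * ρ ^ 2))
    linarith

lemma tendsto_mul_add_div_iff {F : ℝ → ℝ} {a : ℝ} (h : Tendsto (fun E => E * F E) atBot (𝓝 a))
    (κ : ℝ) : Tendsto (fun E => E * (F E + κ / (2 * E))) atBot (𝓝 0) ↔ a + κ / 2 = 0 := by
  have hκ : Tendsto (fun E => E * (F E + κ / (2 * E))) atBot (𝓝 (a + κ / 2)) := by
    refine (h.add_const (κ / 2)).congr' ?_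
    filter_upwards [eventually_ne_atBot 0] with E hE
    field_simp
  exact ⟨fun h0 => tendsto_nhds_unique hκ h0, fun ha => ha ▸ hκ⟩

theorem morse_tunnelling_time_matching_general (β γ : ℝ) :
    Tendsto (fun E : ℝ =>
        E * ((1 / 2) * (∫ w in Set.Ioi (0:ℝ),
            (Real.sqrt (4 * Real.pi ^ 2 * Real.exp (2 * w) - β * Real.exp w + γ - E))⁻¹)
          - (1 / (2 * Real.sqrt (-E))) * Real.log (Real.sqrt (-E) / Real.pi)))
      atBot (nhds (-β / (8 * Real.pi)))
    ∧ ∀ κ : ℝ,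
      Tendsto (fun E : ℝ =>
        E * ((1 / 2) * (∫ w in Set.Ioi (0:ℝ),
            (Real.sqrt (4 * Real.pi ^ 2 * Real.exp (2 * w) - β * Real.exp w + γ - E))⁻¹)
          - (1 / (2 * Real.sqrt (-E))) * Real.log (Real.sqrt (-E) / Real.pi)
          + κ / (2 * E)))
        atBot (nhds 0) ↔ β = 4 * Real.pi * κ := by
  have h := (tendsto_neg_mul_tunnellingTime_sub pi_pos β γ).comp tendsto_neg_atBot_atTop
  simp only [Function.comp_def, neg_neg, ← sub_eq_add_neg, ← add_sub_assoc] at h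
  refine ⟨h, fun κ => (tendsto_mul_add_div_iff h κ).trans ?_⟩
  constructor <;> intro hκ <;> field_simp at * <;> linarith

/-- Asymptotic matching of the tunnelling time
`T(E) = (1/2)∫₀^∞ (4π²e^{2w} − βe^w + γ − E)^{−1/2} dw`:
`E(T(E) − (1/(2√(−E))) log(√(−E)/π)) → −β/(8π)` as `E → −∞`; in particular `T(E)`
matches `(1/(2√(−E))) log(√(−E)/π) − κ/(2E)` to order `E⁻¹` iff `β = 4πκ`. -/
theorem morse_tunnelling_time_matching (β γ : ℝ) (hβ : 0 ≤ β) :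
    Tendsto (fun E : ℝ =>
        E * ((1 / 2) * (∫ w in Set.Ioi (0:ℝ),
            (Real.sqrt (4 * Real.pi ^ 2 * Real.exp (2 * w) - β * Real.exp w + γ - E))⁻¹)
          - (1 / (2 * Real.sqrt (-E))) * Real.log (Real.sqrt (-E) / Real.pi)))
      atBot (nhds (-β / (8 * Real.pi)))
    ∧ ∀ κ : ℝ,
      Tendsto (fun E : ℝ =>
        E * ((1 / 2) * (∫ w in Set.Ioi (0:ℝ),
            (Real.sqrt (4 * Real.pi ^ 2 * Real.exp (2 * w) - β * Real.exp w + γ - E))⁻¹)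
          - (1 / (2 * Real.sqrt (-E))) * Real.log (Real.sqrt (-E) / Real.pi)
          + κ / (2 * E)))
        atBot (nhds 0) ↔ β = 4 * Real.pi * κ :=
  morse_tunnelling_time_matching_general β γ
end
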